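/- Let ∇, ∇' be two irreducible real (resp. quaternionic) L-connections. If they lie in the same Gau(E)-orbit, then they lie in the same Gau(E)^σ-orbit. Consequently, two irreducible real connections are gauge equivalent iff they are real-gauge equivalent. -/

import Mathlib

/- G = Gau(E) acts (on the left) on the set A of L-connections; ι : ℂˣ →* G is
   the central, injective embedding of scalar automorphisms (which act trivially
   on connections, since the action factors through the reduced gauge group);
   σA is the involution σ̄ on connections and σG the (multiplicative, involutive,
   antilinear on scalars) involution u ↦ ū on Gau(E), compatible with the
   action: σ̄(u⊙∇) = ū⊙σ̄(∇).  For two irreducible real (resp. quaternionic)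
   connections ∇, ∇' (σ̄∇ = ∇, σ̄∇' = ∇', stabilizer of ∇' equal to ℂ*·id):
   they lie in the same Gau(E)-orbit iff they lie in the same Gau(E)^σ-orbit. -/
theorem same_gauge_orbit_iff_same_real_gauge_orbit
    {G A : Type*} [Group G] [MulAction G A]
    (ι : ℂˣ →* G) (σA : A → A) (σG : G →* G)
    (hσinv : ∀ g : G, σG (σG g) = g)
    (hιinj : Function.Injective ι)
    (hcentral : ∀ (c : ℂˣ) (g : G), ι c * g = g * ι c)
    (hσι : ∀ c : ℂˣ, σG (ι c) = ι (Units.map (starRingEnd ℂ : ℂ →+* ℂ).toMonoidHom c))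
    (hscal : ∀ (c : ℂˣ) (a : A), ι c • a = a)
    (hcompat : ∀ (g : G) (a : A), σA (g • a) = σG g • σA a)
    (D D' : A) (hD : σA D = D) (hD' : σA D' = D')
    (hirr : ∀ g : G, g • D' = D' → ∃ c : ℂˣ, g = ι c) :
    (∃ u : G, u • D' = D) ↔ (∃ v : G, σG v = v ∧ v • D' = D) := by
  constructor
  · rintro ⟨u, hu⟩
    have h1 : σG u • D' = D := by
      have := hcompat u D'
      rw [hu, hD, hD'] at this
      exact this.symm
    have h2 : (u⁻¹ * σG u) • D' = D' := by
      rw [mul_smul, h1, ← hu, inv_smul_smul]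
    obtain ⟨c, hc⟩ := hirr _ h2
    have hσu : σG u = u * ι c := by
      rw [← hc, mul_inv_cancel_left]
    have h3 : u = u * (ι c * ι (Units.map (starRingEnd ℂ : ℂ →+* ℂ).toMonoidHom c)) := by
      conv_lhs => rw [← hσinv u, hσu]
      rw [map_mul, hσι, hσu, mul_assoc]
    have h4 : c * Units.map (starRingEnd ℂ : ℂ →+* ℂ).toMonoidHom c = 1 := by
      apply hιinj
      rw [map_mul, map_one]
      exact (left_eq_mul.mp h3)
    have h5 : (c : ℂ) * (starRingEnd ℂ) (c : ℂ) = 1 := by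
      have := congrArg (Units.val) h4
      simpa using this
    have habsc : ‖(c : ℂ)‖ = 1 := by
      have hn : Complex.normSq (c : ℂ) = 1 := by
        have := Complex.mul_conj (c : ℂ)
        rw [h5] at this
        exact_mod_cast this.symm
      have : ‖(c : ℂ)‖ ^ 2 = 1 := by rw [Complex.sq_norm, hn]
      nlinarith [norm_nonneg (c : ℂ)]
    set d0 : ℂ := Complex.exp (Complex.log (c : ℂ) / 2) with hd0
    have hcne : (c : ℂ) ≠ 0 := Units.ne_zero c
    have hd2 : d0 * d0 = (c : ℂ) := by
      rw [hd0, ← Complex.exp_add, add_halves, Complex.exp_log hcne]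
    have habsd : ‖d0‖ = 1 := by
      rw [hd0, Complex.norm_exp]
      simp [Complex.log_re, habsc]
    have hconjd : d0 * (starRingEnd ℂ) d0 = 1 := by
      rw [Complex.mul_conj]
      norm_cast
      rw [← Complex.sq_norm, habsd]; norm_num
    set d : ℂˣ := Units.mk0 d0 (Complex.exp_ne_zero _) with hd
    refine ⟨u * ι d, ?_, ?_⟩
    · rw [map_mul, hσι, hσu, mul_assoc, ← map_mul]
      congr 1
      apply congrArg
      ext
      show (c : ℂ) * (starRingEnd ℂ) d0 = d0
      rw [← hd2, mul_assoc, hconjd, mul_one]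
    · rw [mul_smul, hscal, hu]
  · rintro ⟨v, _, hv⟩
    exact ⟨v, hv⟩
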